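/- Let E be a real inner product space, let ϖ ≥ 1 be a real number, and let a, b ∈ E. Then ⟪‖a‖^{ϖ−1}·a − ‖b‖^{ϖ−1}·b, a − b⟫ ≥ 2^{1−ϖ}·‖a − b‖^{ϖ+1}. -/

import Mathlib

/-!
Put `x = ‖a‖`, `y = ‖b‖`, `z = ‖a - b‖`. The inner product equals
`(x ^ (ϖ - 1) * (x² - y² + z²) + y ^ (ϖ - 1) * (y² - x² + z²)) / 2`, an affine function of `z²`,
while `2 ^ (1 - ϖ) * z ^ (ϖ + 1)` is a convex function of `z²`. As `|x - y| ≤ z ≤ x + y`, it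
suffices to compare them at the collinear configurations: at `z = x + y` this is the power mean
inequality `(x + y) ^ ϖ ≤ 2 ^ (ϖ - 1) * (x ^ ϖ + y ^ ϖ)`, at `z = |x - y|` the superadditivity
of `t ↦ t ^ ϖ`.
-/

open scoped RealInnerProductSpace NNReal

open Set in
theorem ConvexOn.le_affine_of_mem_Icc {s : Set ℝ} {f : ℝ → ℝ} (hf : ConvexOn ℝ s f)
    {u v w α β : ℝ} (hu : u ∈ s) (hv : v ∈ s) (hw : w ∈ Icc u v)
    (hfu : f u ≤ α + β * u) (hfv : f v ≤ α + β * v) : f w ≤ α + β * w := by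
  rw [← segment_eq_Icc (hw.1.trans hw.2)] at hw
  obtain ⟨a, b, ha, hb, hab, rfl⟩ := hw
  calc f (a • u + b • v) ≤ a • f u + b • f v := hf.2 hu hv ha hb hab
    _ ≤ a * (α + β * u) + b * (α + β * v) := by simp only [smul_eq_mul]; gcongr
    _ = α + β * (a • u + b • v) := by simp only [smul_eq_mul]; linear_combination α * hab

namespace Real

variable {p x y : ℝ}

theorem rpow_sub_one_mul_self (hp : 1 ≤ p) (hx : 0 ≤ x) : x ^ (p - 1) * x = x ^ p := by
  simpa using (rpow_add_one' hx (by linarith : p - 1 + 1 ≠ 0)).symm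

theorem add_rpow_le_two_rpow_mul_add_rpow (hp : 1 ≤ p) (hx : 0 ≤ x) (hy : 0 ≤ y) :
    (x + y) ^ p ≤ 2 ^ (p - 1) * (x ^ p + y ^ p) := by
  lift x to ℝ≥0 using hx
  lift y to ℝ≥0 using hy
  exact_mod_cast NNReal.rpow_add_le_mul_rpow_add_rpow x y hp

theorem sub_rpow_le_rpow_sub_rpow (hp : 1 ≤ p) (hy : 0 ≤ y) (hyx : y ≤ x) :
    (x - y) ^ p ≤ x ^ p - y ^ p := by
  obtain ⟨d, hd, rfl⟩ : ∃ d, 0 ≤ d ∧ x = d + y := ⟨x - y, sub_nonneg.2 hyx, by ring⟩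
  rw [add_sub_cancel_right, le_sub_iff_add_le]
  lift d to ℝ≥0 using hd
  lift y to ℝ≥0 using hy
  exact_mod_cast NNReal.add_rpow_le_rpow_add d y hp

theorem two_rpow_one_sub_mul_add_rpow_add_one_le (hp : 1 ≤ p) (hx : 0 ≤ x) (hy : 0 ≤ y) :
    2 ^ (1 - p) * (x + y) ^ (p + 1) ≤ (x ^ p + y ^ p) * (x + y) :=
  calc 2 ^ (1 - p) * (x + y) ^ (p + 1) = 2 ^ (1 - p) * (x + y) ^ p * (x + y) := by
        rw [rpow_add_one' (by positivity) (by linarith)]; ring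
    _ ≤ 2 ^ (1 - p) * (2 ^ (p - 1) * (x ^ p + y ^ p)) * (x + y) := by
        gcongr; exact add_rpow_le_two_rpow_mul_add_rpow hp hx hy
    _ = (x ^ p + y ^ p) * (x + y) := by
        rw [← mul_assoc, ← rpow_add two_pos]; simp

theorem two_rpow_one_sub_mul_abs_sub_rpow_add_one_le (hp : 1 ≤ p) (hx : 0 ≤ x) (hy : 0 ≤ y) :
    2 ^ (1 - p) * |x - y| ^ (p + 1) ≤ (x ^ p - y ^ p) * (x - y) := by
  wlog hyx : y ≤ x generalizing x y
  · have := this hy hx (le_of_not_ge hyx)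
    rw [abs_sub_comm]; linarith
  rw [abs_of_nonneg (sub_nonneg.2 hyx)]
  calc 2 ^ (1 - p) * (x - y) ^ (p + 1) ≤ (x - y) ^ (p + 1) :=
        mul_le_of_le_one_left (by bound) (rpow_le_one_of_one_le_of_nonpos one_le_two (by linarith))
    _ = (x - y) ^ p * (x - y) := rpow_add_one' (sub_nonneg.2 hyx) (by linarith)
    _ ≤ (x ^ p - y ^ p) * (x - y) := by
        gcongr; exact sub_rpow_le_rpow_sub_rpow hp hy hyx

end Real

open Real Set in
theorem two_rpow_one_sub_mul_rpow_add_one_le_of_abs_sub_le_of_le_add {p x y z : ℝ} (hp : 1 ≤ p)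
    (hx : 0 ≤ x) (hy : 0 ≤ y) (hxyz : |x - y| ≤ z) (hzxy : z ≤ x + y) :
    2 ^ (1 - p) * z ^ (p + 1) ≤
      (x ^ (p - 1) * (x ^ 2 - y ^ 2 + z ^ 2) + y ^ (p - 1) * (y ^ 2 - x ^ 2 + z ^ 2)) / 2 := by
  have hz : 0 ≤ z := (abs_nonneg _).trans hxyz
  set f : ℝ → ℝ := fun d ↦ 2 ^ (1 - p) * d ^ ((p + 1) / 2)
  have hf : ConvexOn ℝ (Ici 0) f := (convexOn_rpow (by linarith)).smul (by positivity)
  have hf_sq (t : ℝ) : f (t ^ 2) = 2 ^ (1 - p) * |t| ^ (p + 1) := by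
    simp only [f]; rw [rpow_div_two_eq_sqrt _ (sq_nonneg t), sqrt_sq_eq_abs]
  have hxp := rpow_sub_one_mul_self hp hx
  have hyp := rpow_sub_one_mul_self hp hy
  have key := hf.le_affine_of_mem_Icc (u := (x - y) ^ 2) (v := (x + y) ^ 2) (w := z ^ 2)
    (α := (x ^ (p - 1) * (x ^ 2 - y ^ 2) + y ^ (p - 1) * (y ^ 2 - x ^ 2)) / 2)
    (β := (x ^ (p - 1) + y ^ (p - 1)) / 2) (mem_Ici.2 (sq_nonneg _)) (mem_Ici.2 (sq_nonneg _))
    ⟨sq_abs (x - y) ▸ pow_le_pow_left₀ (abs_nonneg _) hxyz 2, pow_le_pow_left₀ hz hzxy 2⟩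
    (by
      rw [hf_sq]
      refine (two_rpow_one_sub_mul_abs_sub_rpow_add_one_le hp hx hy).trans_eq ?_
      rw [← hxp, ← hyp]; ring)
    (by
      rw [hf_sq, abs_of_nonneg (by positivity)]
      refine (two_rpow_one_sub_mul_add_rpow_add_one_le hp hx hy).trans_eq ?_
      rw [← hxp, ← hyp]; ring)
  rw [hf_sq, abs_of_nonneg hz] at key
  linarith

theorem real_inner_smul_sub_smul_sub {E : Type*} [NormedAddCommGroup E] [InnerProductSpace ℝ E]
    (s t : ℝ) (a b : E) :
    ⟪s • a - t • b, a - b⟫ =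
      (s * (‖a‖ ^ 2 - ‖b‖ ^ 2 + ‖a - b‖ ^ 2) + t * (‖b‖ ^ 2 - ‖a‖ ^ 2 + ‖a - b‖ ^ 2)) / 2 := by
  rw [norm_sub_sq_real]
  simp only [inner_sub_left, inner_sub_right, real_inner_smul_left, real_inner_self_eq_norm_sq,
    real_inner_comm a b]
  ring

/-- Pointwise coercive monotonicity of the damping nonlinearity `a ↦ ‖a‖^(ϖ-1) • a`
(estimate (2.23) of the paper). -/
theorem damping_coercive_monotone {E : Type*} [NormedAddCommGroup E] [InnerProductSpace ℝ E]
    (ϖ : ℝ) (hϖ : 1 ≤ ϖ) (a b : E) :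
    ⟪(‖a‖ ^ (ϖ - 1)) • a - (‖b‖ ^ (ϖ - 1)) • b, a - b⟫ ≥
      (2 : ℝ) ^ (1 - ϖ) * ‖a - b‖ ^ (ϖ + 1) := by
  rw [ge_iff_le, real_inner_smul_sub_smul_sub]
  exact two_rpow_one_sub_mul_rpow_add_one_le_of_abs_sub_le_of_le_add hϖ (norm_nonneg a)
    (norm_nonneg b) (abs_norm_sub_norm_le a b) (norm_sub_le a b)
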